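/- arXiv:1410.2920 — 11 statements merged into one kernel-verified Lean document; each statement's English description precedes it below -/
import Mathlib

section
/- Let G = (V1 ∪ V2, E) be a simple bipartite graph with girth at least 8 (no 4-cycles and no 6-cycles). For a left vertex x and a right-neighbor c of x, define the repair group R(x,c) = {c} ∪ (N(c) \ {x}). Then for distinct left vertices x_i ≠ x_j, any single repair group of x_i intersects (in vertices) at most one repair group of x_j among the repair groups of x_j. -/
def No4Cycle {V1 V2 : Type*} (E : V1 → V2 → Prop) : Prop :=
  ∀ x1 x2 c1 c2, x1 ≠ x2 → c1 ≠ c2 → E x1 c1 → E x1 c2 → E x2 c1 → E x2 c2 → False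

def No6Cycle {V1 V2 : Type*} (E : V1 → V2 → Prop) : Prop :=
  ∀ x1 x2 x3 c1 c2 c3, x1 ≠ x2 → x1 ≠ x3 → x2 ≠ x3 → c1 ≠ c2 → c1 ≠ c3 → c2 ≠ c3 →
    E x1 c1 → E x2 c1 → E x2 c2 → E x3 c2 → E x3 c3 → E x1 c3 → False

/-- The repair group of a left vertex `x` for one of its right-neighbors `c`:
`{c} ∪ (N(c) \ {x})`, as a set of vertices of the bipartite graph. -/
def repairGroup {V1 V2 : Type*} (E : V1 → V2 → Prop) (x : V1) (c : V2) : Set (V1 ⊕ V2) :=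
  {Sum.inr c} ∪ Sum.inl '' {y : V1 | E y c ∧ y ≠ x}

/-- In a bipartite graph of girth at least 8 (no 4- and no 6-cycles), any single
repair group of a left vertex `xi` intersects at most one repair group of any other
left vertex `xj`. -/
theorem stmt_1 {V1 V2 : Type*} (E : V1 → V2 → Prop)
    (h4 : No4Cycle E) (h6 : No6Cycle E)
    (xi xj : V1) (hne : xi ≠ xj)
    (c : V2) (hc : E xi c)
    (c1 c2 : V2) (hc1 : E xj c1) (hc2 : E xj c2)
    (h1 : (repairGroup E xi c ∩ repairGroup E xj c1).Nonempty)
    (h2 : (repairGroup E xi c ∩ repairGroup E xj c2).Nonempty) :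
    c1 = c2 := by
  have extract : ∀ d : V2, E xj d → (repairGroup E xi c ∩ repairGroup E xj d).Nonempty →
      c = d ∨ ∃ y, E y c ∧ y ≠ xi ∧ E y d ∧ y ≠ xj := by
    intro d hd ⟨v, hvi, hvj⟩
    rcases hvi with hvi | ⟨y, ⟨hyc, hyi⟩, rfl⟩
    · rcases hvj with hvj | ⟨y, hy, hyv⟩
      · left; rw [Set.mem_singleton_iff] at hvi hvj
        exact Sum.inr.inj (hvi.symm.trans hvj)
      · rw [Set.mem_singleton_iff] at hvi; rw [hvi] at hyv; exact absurd hyv (by simp)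
    · rcases hvj with hvj | ⟨y', hy', hy'v⟩
      · rw [Set.mem_singleton_iff] at hvj; exact absurd hvj (by simp)
      · right
        exact ⟨y, hyc, hyi, Sum.inl.inj hy'v ▸ hy'.1, Sum.inl.inj hy'v ▸ hy'.2⟩
  by_contra hcc
  rcases extract c1 hc1 h1 with rfl | ⟨y1, hy1c, hy1i, hy1c1, hy1j⟩
  · rcases extract c2 hc2 h2 with rfl | ⟨y2, hy2c, hy2i, hy2c2, hy2j⟩
    · exact hcc rfl
    · exact h4 xj y2 c c2 (Ne.symm hy2j) hcc hc1 hc2 hy2c hy2c2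
  · rcases extract c2 hc2 h2 with rfl | ⟨y2, hy2c, hy2i, hy2c2, hy2j⟩
    · exact h4 xj y1 c1 c (Ne.symm hy1j) hcc hc1 hc2 hy1c1 hy1c
    · by_cases hcc1 : c = c1
      · subst hcc1; exact h4 xj y2 c c2 (Ne.symm hy2j) hcc hc1 hc2 hy2c hy2c2
      · by_cases hcc2 : c = c2
        · subst hcc2; exact h4 xj y1 c1 c (Ne.symm hy1j) hcc hc1 hc2 hy1c1 hy1c
        · by_cases hyy : y1 = y2
          · subst hyy; exact h4 xj y1 c1 c2 (Ne.symm hy1j) hcc hc1 hc2 hy1c1 hy2c2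
          · exact h6 y1 y2 xj c c2 c1 hyy hy1j hy2j hcc2 hcc1 (Ne.symm hcc)
              hy1c hy2c hy2c2 hc2 hc1 hy1c1
end

section
/- Let G = (V1 ∪ V2, E) be a bipartite graph with girth at least 8 in which every left vertex has degree at least k. Then for any multiset of k requests for left vertices (i.e., a function assigning to each left vertex x a multiplicity k_x ≥ 0 with Σ k_x = k), there exists a family of pairwise disjoint sets of vertices S_1, ..., S_k such that each request for a left vertex x is served either by the singleton {x} (used at most once per x) or by some repair group R(x,c) = {c} ∪ (N(c) \ {x}) of x. -/
open Finset Function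

theorem Finset.exists_mem_forall_notMem_of_card_lt {α ι : Type*} {s : Finset α} {D : Finset ι}
    {B : ι → Set α} (hB : ∀ j ∈ D, (B j).Subsingleton) (h : D.card < s.card) :
    ∃ a ∈ s, ∀ j ∈ D, a ∉ B j := by
  classical
  by_contra! hcover
  have hsub : s ⊆ D.biUnion fun j => s.filter (· ∈ B j) := fun a ha => by
    obtain ⟨j, hj, haj⟩ := hcover a ha
    exact mem_biUnion.2 ⟨j, hj, mem_filter.2 ⟨ha, haj⟩⟩
  have hle : s.card ≤ D.card :=
    calc s.card ≤ (D.biUnion fun j => s.filter (· ∈ B j)).card := card_le_card hsub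
      _ ≤ ∑ j ∈ D, (s.filter (· ∈ B j)).card := card_biUnion_le
      _ ≤ ∑ _j ∈ D, 1 := sum_le_sum fun j hj => card_le_one.2 fun a ha b hb =>
          hB j hj (mem_filter.1 ha).2 (mem_filter.1 hb).2
      _ = D.card := by simp
  omega

section

variable {V1 V2 : Type*} {E : V1 → V2 → Prop}

@[simp]
theorem mem_repairGroup_inl {x y : V1} {c : V2} :
    Sum.inl y ∈ repairGroup E x c ↔ E y c ∧ y ≠ x := by
  simp [repairGroup]

@[simp]
theorem mem_repairGroup_inr {x : V1} {c d : V2} : Sum.inr d ∈ repairGroup E x c ↔ d = c := by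
  simp [repairGroup]

theorem not_disjoint_repairGroup_iff {x x' : V1} {c c' : V2} :
    ¬Disjoint (repairGroup E x c) (repairGroup E x' c') ↔
      c = c' ∨ ∃ y, E y c ∧ E y c' ∧ y ≠ x ∧ y ≠ x' := by
  rw [Set.not_disjoint_iff]
  constructor
  · rintro ⟨y | d, ha, ha'⟩
    · simp only [mem_repairGroup_inl] at ha ha'
      exact Or.inr ⟨y, ha.1, ha'.1, ha.2, ha'.2⟩
    · simp only [mem_repairGroup_inr] at ha ha'
      exact Or.inl (ha.symm.trans ha')
  · rintro (rfl | ⟨y, hyc, hyc', hyx, hyx'⟩)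
    · exact ⟨Sum.inr c, by simp, by simp⟩
    · exact ⟨Sum.inl y, by simp [hyc, hyx], by simp [hyc', hyx']⟩

theorem No4Cycle.eq_of_adj {x z : V1} {c₁ c₂ : V2} (h4 : No4Cycle E) (hxz : x ≠ z)
    (hx₁ : E x c₁) (hx₂ : E x c₂) (hz₁ : E z c₁) (hz₂ : E z c₂) : c₁ = c₂ := by
  by_contra hne
  exact h4 x z c₁ c₂ hxz hne hx₁ hx₂ hz₁ hz₂

theorem No4Cycle.eq_of_not_disjoint_repairGroup {x x' : V1} {c c' : V2} (h4 : No4Cycle E)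
    (hc : E x c) (hc' : E x c') (h : ¬Disjoint (repairGroup E x c) (repairGroup E x' c')) :
    c = c' := by
  rcases not_disjoint_repairGroup_iff.1 h with rfl | ⟨y, hyc, hyc', hyx, -⟩
  · rfl
  · exact h4.eq_of_adj (Ne.symm hyx) hc hc' hyc hyc'

theorem subsingleton_not_disjoint_repairGroup (h4 : No4Cycle E) (h6 : No6Cycle E)
    (x x' : V1) (c' : V2) :
    {c | E x c ∧ ¬Disjoint (repairGroup E x c) (repairGroup E x' c')}.Subsingleton := by
  rintro c₁ ⟨hx₁, hb₁⟩ c₂ ⟨hx₂, hb₂⟩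
  by_cases hxc' : E x c'
  · exact (h4.eq_of_not_disjoint_repairGroup hx₁ hxc' hb₁).trans
      (h4.eq_of_not_disjoint_repairGroup hx₂ hxc' hb₂).symm
  have hne : ∀ {c}, E x c → c ≠ c' := fun hc h => hxc' (h ▸ hc)
  obtain ⟨y₁, hy₁, hy₁', hy₁x, -⟩ := (not_disjoint_repairGroup_iff.1 hb₁).resolve_left (hne hx₁)
  obtain ⟨y₂, hy₂, hy₂', hy₂x, -⟩ := (not_disjoint_repairGroup_iff.1 hb₂).resolve_left (hne hx₂)
  by_contra h₁₂
  rcases eq_or_ne y₁ y₂ with rfl | hy₁₂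
  · exact h₁₂ (h4.eq_of_adj (Ne.symm hy₁x) hx₁ hx₂ hy₁ hy₂)
  · exact h6 x y₁ y₂ c₁ c' c₂ (Ne.symm hy₁x) (Ne.symm hy₂x) hy₁₂ (hne hx₁) h₁₂
      (hne hx₂).symm hx₁ hy₁ hy₁' hy₂' hy₂ hx₂

theorem exists_repairGroup_disjoint {ι : Type*} (h4 : No4Cycle E) (h6 : No6Cycle E) {x : V1}
    {s : Finset V2} (hs : ∀ c ∈ s, E x c) {D : Finset ι} (hD : D.card < s.card)
    {A : ι → Set (V1 ⊕ V2)} (hA : ∀ j ∈ D, ∃ x' c', A j = repairGroup E x' c') :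
    ∃ c, E x c ∧ ∀ j ∈ D, Disjoint (repairGroup E x c) (A j) := by
  have hblock : ∀ j ∈ D, {c | E x c ∧ ¬Disjoint (repairGroup E x c) (A j)}.Subsingleton := by
    intro j hj
    obtain ⟨x', c', hA⟩ := hA j hj
    exact hA ▸ subsingleton_not_disjoint_repairGroup h4 h6 x x' c'
  obtain ⟨c, hcs, hfree⟩ := exists_mem_forall_notMem_of_card_lt hblock hD
  exact ⟨c, hs c hcs, fun j hj => not_not.1 fun h => hfree j hj ⟨hs c hcs, h⟩⟩

theorem exists_pairwiseDisjoint_repairGroup {ι : Type*} (h4 : No4Cycle E) (h6 : No6Cycle E)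
    (req : ι → V1) (D : Finset ι)
    (hdeg : ∀ x : V1, ∃ s : Finset V2, D.card ≤ s.card ∧ ∀ c ∈ s, E x c) :
    ∃ S : ι → Set (V1 ⊕ V2), (∀ i ∈ D, ∃ c, E (req i) c ∧ S i = repairGroup E (req i) c) ∧
      (D : Set ι).PairwiseDisjoint S := by
  classical
  induction D using Finset.induction_on with
  | empty => exact ⟨fun _ => ∅, by simp, by simp⟩
  | insert i D hi ih =>
    have hdeg' : ∀ x, ∃ s : Finset V2, D.card < s.card ∧ ∀ c ∈ s, E x c := by
      simpa [card_insert_of_notMem hi, Nat.succ_le_iff] using hdeg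
    obtain ⟨S, hS, hdisj⟩ := ih fun x => (hdeg' x).imp fun s hs => ⟨hs.1.le, hs.2⟩
    obtain ⟨s, hs, hsE⟩ := hdeg' (req i)
    obtain ⟨c, hc, hcfree⟩ := exists_repairGroup_disjoint h4 h6 hsE hs
      fun j hj => ⟨req j, (hS j hj).imp fun _ h => h.2⟩
    have hne : ∀ j ∈ D, j ≠ i := fun j hj h => hi (h ▸ hj)
    refine ⟨update S i (repairGroup E (req i) c), ?_, ?_⟩
    · intro j hj
      rcases mem_insert.1 hj with rfl | hj
      · exact ⟨c, hc, update_self ..⟩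
      · simpa [hne j hj] using hS j hj
    · rw [coe_insert]
      refine Set.PairwiseDisjoint.insert_of_notMem ?_ hi fun j hj => ?_
      · exact hdisj.mono_on fun j hj => by simp [hne j hj]
      · simpa [hne j hj] using hcfree j hj

end

/-- In a bipartite graph with girth at least 8 in which every left vertex has degree
at least `k`, any multiset of `k` read requests for left vertices (given as a
function `req : Fin k → V1`) can be served by pairwise disjoint sets of vertices,
each being either the singleton of the requested vertex or one of its repair groups. -/
theorem stmt_2 {V1 V2 : Type*} (E : V1 → V2 → Prop) (k : ℕ)
    (h4 : No4Cycle E) (h6 : No6Cycle E)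
    (hdeg : ∀ x : V1, ∃ s : Finset V2, k ≤ s.card ∧ ∀ c ∈ s, E x c)
    (req : Fin k → V1) :
    ∃ S : Fin k → Set (V1 ⊕ V2),
      (∀ i j : Fin k, i ≠ j → Disjoint (S i) (S j)) ∧
      ∀ i : Fin k,
        S i = {Sum.inl (req i)} ∨
        ∃ c : V2, E (req i) c ∧ S i = repairGroup E (req i) c := by
  obtain ⟨S, hS, hdisj⟩ := exists_pairwiseDisjoint_repairGroup h4 h6 req univ (by simpa using hdeg)
  exact ⟨S, fun i j hij => hdisj (mem_univ i) (mem_univ j) hij, fun i => Or.inr (hS i (mem_univ i))⟩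
end

section
/- Let G = (V1, V2, E) be a bipartite graph with no 4-cycles or 6-cycles, and let G' be obtained from G by taking b copies of each left vertex and partitioning the edges at each original left vertex among its b copies (each edge of G incident to left vertex i is assigned to exactly one copy of i). Then G' has no 4-cycles and no 6-cycles. -/
/-- Splitting each left vertex of a 4- and 6-cycle-free bipartite graph into `b`
copies, distributing the incident edges among the copies (via the assignment `f`),
yields a graph with no 4-cycles and no 6-cycles. -/
theorem stmt_3 {V1 V2 : Type*} (E : V1 → V2 → Prop) (b : ℕ)
    (f : V1 → V2 → Fin b)
    (h4 : No4Cycle E) (h6 : No6Cycle E) :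
    No4Cycle (fun (p : V1 × Fin b) (j : V2) => E p.1 j ∧ f p.1 j = p.2) ∧
    No6Cycle (fun (p : V1 × Fin b) (j : V2) => E p.1 j ∧ f p.1 j = p.2) := by
  -- two distinct copies sharing a common column must have distinct base vertices
  have key : ∀ (p q : V1 × Fin b) (c : V2), p ≠ q →
      (E p.1 c ∧ f p.1 c = p.2) → (E q.1 c ∧ f q.1 c = q.2) → p.1 ≠ q.1 := by
    rintro ⟨x, a⟩ ⟨y, a'⟩ c hne ⟨_, hp⟩ ⟨_, hq⟩ h
    dsimp at *
    subst h
    exact hne (by simp [← hp, ← hq])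
  constructor
  · rintro x1 x2 c1 c2 hx hc e11 e12 e21 e22
    exact h4 x1.1 x2.1 c1 c2 (key x1 x2 c1 hx e11 e21) hc e11.1 e12.1 e21.1 e22.1
  · rintro x1 x2 x3 c1 c2 c3 h12 h13 h23 hc12 hc13 hc23 e11 e21 e22 e32 e33 e13
    exact h6 x1.1 x2.1 x3.1 c1 c2 c3 (key x1 x2 c1 h12 e11 e21)
      (key x1 x3 c3 h13 e13 e33) (key x2 x3 c2 h23 e22 e32)
      hc12 hc13 hc23 e11.1 e21.1 e22.1 e32.1 e33.1 e13.1
end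

section
/- The zig-zag bipartite graph has no 4-cycles: for a prime k and integer r ≥ 1, define the bipartite graph with left vertices (l_0, l_1,...,l_r) where l_0 ∈ {1,...,r} and l_i ∈ Z_k, right vertices (v_0, v_1,...,v_r) with all v_i ∈ Z_k, and an edge between l and v iff (l_1,...,l_r) + v_0·e_{l_0} = (v_1,...,v_r) in Z_k^r. This graph contains no cycle of length 4. -/
/-- The edge relation of the zig-zag bipartite graph: a left vertex
`l = (l₀, (l₁,…,l_r))` with `l₀ ∈ Fin r` and `lᵢ ∈ ZMod k` is adjacent to a right
vertex `v = (v₀, (v₁,…,v_r))` iff `(l₁,…,l_r) + v₀·e_{l₀} = (v₁,…,v_r)` over `ZMod k`. -/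
def zigzagEdge (k r : ℕ) (l : Fin r × (Fin r → ZMod k))
    (v : ZMod k × (Fin r → ZMod k)) : Prop :=
  ∀ t : Fin r, v.2 t = l.2 t + (if t = l.1 then v.1 else 0)

/-- The zig-zag bipartite graph has no 4-cycles. -/
theorem stmt_4 (k r : ℕ) (hk : k.Prime) (hr : 1 ≤ r) :
    No4Cycle (zigzagEdge k r) := by
  intro x1 x2 c1 c2 hx hc h11 h12 h21 h22
  by_cases hj : x1.1 = x2.1
  · -- then x1 = x2
    apply hx
    have h2 : x1.2 = x2.2 := by
      funext t
      have a1 := h11 t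
      have a2 := h21 t
      rw [hj] at a1
      by_cases ht : t = x2.1
      · subst ht
        simp at a1 a2
        exact add_right_cancel (a1.symm.trans a2)
      · simp [ht] at a1 a2
        exact a1.symm.trans a2
    exact Prod.ext hj h2
  · -- then c1 = c2
    apply hc
    have hv : c1.1 = c2.1 := by
      have a1 := h11 x1.1
      have a2 := h21 x1.1
      have b1 := h12 x1.1
      have b2 := h22 x1.1
      simp [hj] at a1 a2 b1 b2
      have e1 : c1.2 x1.1 = x2.2 x1.1 := by rw [a2]
      have e2 : c2.2 x1.1 = x2.2 x1.1 := by rw [b2]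
      have := e1.trans e2.symm
      rw [a1, b1] at this
      linear_combination this
    have h2 : c1.2 = c2.2 := by
      funext t
      rw [h11 t, h12 t, hv]
    exact Prod.ext hv h2
end

section
/- The zig-zag bipartite graph has girth at least 8: for a prime k and integer r ≥ 1, the bipartite graph with left vertices (l_0,...,l_r), l_0 ∈ {1,...,r}, l_i ∈ Z_k, right vertices (v_0,...,v_r) ∈ Z_k^{r+1}, and edges given by (l_1,...,l_r) + v_0·e_{l_0} = (v_1,...,v_r), contains no 4-cycle and no 6-cycle. -/
lemma zig_left_eq {k r : ℕ} {l l' : Fin r × (Fin r → ZMod k)} {c}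
    (h : zigzagEdge k r l c) (h' : zigzagEdge k r l' c) (hj : l.1 = l'.1) : l = l' := by
  have h2 : l.2 = l'.2 := by
    funext t
    have e := (h t).symm.trans (h' t)
    rw [hj] at e
    exact add_right_cancel e
  exact Prod.ext hj h2

lemma zig_off {k r : ℕ} {l : Fin r × (Fin r → ZMod k)} {c}
    (h : zigzagEdge k r l c) {t : Fin r} (ht : t ≠ l.1) : c.2 t = l.2 t := by
  have e := h t
  rw [if_neg ht, add_zero] at e
  exact e

/-- The zig-zag bipartite graph has girth at least 8: no 4-cycles and no 6-cycles. -/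
theorem stmt_5 (k r : ℕ) (hk : k.Prime) (hr : 1 ≤ r) :
    No4Cycle (zigzagEdge k r) ∧ No6Cycle (zigzagEdge k r) := by
  constructor
  · intro x1 x2 c1 c2 hx hc h11 h12 h21 h22
    by_cases hj : x1.1 = x2.1
    · exact hx (zig_left_eq h11 h21 hj)
    · have hy : c1.2 = c2.2 := by
        funext t
        by_cases ht : t = x1.1
        · have ht2 : t ≠ x2.1 := ht ▸ hj
          rw [zig_off h21 ht2, zig_off h22 ht2]
        · rw [zig_off h11 ht, zig_off h12 ht]
      have ha : c1.1 = c2.1 := by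
        have e1 := h11 x1.1
        have e2 := h12 x1.1
        rw [if_pos rfl] at e1 e2
        rw [hy] at e1
        exact add_left_cancel (e1.symm.trans e2)
      exact hc (Prod.ext ha hy)
  · intro x1 x2 x3 c1 c2 c3 h12 h13 h23 hc12 hc13 hc23 e11 e21 e22 e32 e33 e13
    by_cases hj12 : x1.1 = x2.1
    · exact h12 (zig_left_eq e11 e21 hj12)
    by_cases hj23 : x2.1 = x3.1
    · exact h23 (zig_left_eq e22 e32 hj23)
    by_cases hj13 : x1.1 = x3.1
    · exact h13 (zig_left_eq e13 e33 hj13)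
    -- all three j's distinct; show c1 = c2
    have hj21 : x2.1 ≠ x1.1 := fun h => hj12 h.symm
    have hj23' : x2.1 ≠ x3.1 := hj23
    have key : c1.2 x2.1 = c2.2 x2.1 := by
      have a1 : c1.2 x2.1 = x1.2 x2.1 := zig_off e11 hj21
      have a2 : c3.2 x2.1 = x1.2 x2.1 := zig_off e13 hj21
      have a3 : c3.2 x2.1 = x3.2 x2.1 := zig_off e33 hj23'
      have a4 : c2.2 x2.1 = x3.2 x2.1 := zig_off e32 hj23'
      rw [a1, ← a2, a3, ← a4]
    have hy : c1.2 = c2.2 := by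
      funext t
      by_cases ht : t = x2.1
      · rw [ht]; exact key
      · rw [zig_off e21 ht, zig_off e22 ht]
    have ha : c1.1 = c2.1 := by
      have f1 := e21 x2.1
      have f2 := e22 x2.1
      rw [if_pos rfl] at f1 f2
      rw [hy] at f1
      exact add_left_cancel (f1.symm.trans f2)
    exact hc12 (Prod.ext ha hy)
end

section
/- Gadget lemma: if there exists an (n, N, k, m) multiset batch code over alphabet Σ, then for every positive integer g there exists a (gn, gN, k, m) multiset batch code over Σ, obtained by encoding each of the g length-n blocks independently and stacking the resulting codewords bucket-wise. -/
/-- `C` together with the bucket assignment `β` is an `(n, N, k, m)` multiset batch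
code over alphabet `F`: any multiset of `k` read requests (`req : Fin k → Fin n`) can
be served from pairwise disjoint sets of buckets `S j`, reading at most one code
symbol from each bucket of `S j` to recover the `j`-th requested message symbol. -/
def IsMultisetBatchCode (F : Type*) (n N k m : ℕ)
    (C : (Fin n → F) → Fin N → F) (β : Fin N → Fin m) : Prop :=
  ∀ req : Fin k → Fin n, ∃ S : Fin k → Finset (Fin m),
    (∀ i j : Fin k, i ≠ j → Disjoint (S i) (S j)) ∧
    ∀ j : Fin k, ∃ (pos : {b // b ∈ S j} → Fin N) (dec : ({b // b ∈ S j} → F) → F),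
      (∀ b, β (pos b) = b.1) ∧ ∀ x : Fin n → F, dec (fun b => C x (pos b)) = x (req j)

/-- Gadget lemma: from an `(n, N, k, m)` multiset batch code one obtains a
`(gn, gN, k, m)` multiset batch code, for every positive integer `g`. -/
theorem stmt_11 (F : Type*) (n N k m : ℕ)
    (C : (Fin n → F) → Fin N → F) (β : Fin N → Fin m)
    (h : IsMultisetBatchCode F n N k m C β) (g : ℕ) (hg : 0 < g) :
    ∃ (C' : (Fin (g * n) → F) → Fin (g * N) → F) (β' : Fin (g * N) → Fin m),
      IsMultisetBatchCode F (g * n) (g * N) k m C' β' := by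
  refine ⟨fun x i => C (fun t => x (finProdFinEquiv ((finProdFinEquiv.symm i).1, t)))
      (finProdFinEquiv.symm i).2,
    fun i => β (finProdFinEquiv.symm i).2, ?_⟩
  intro req
  obtain ⟨S, hdisj, hserve⟩ := h (fun j => (finProdFinEquiv.symm (req j)).2)
  refine ⟨S, hdisj, fun j => ?_⟩
  obtain ⟨pos, dec, hβ, hdec⟩ := hserve j
  refine ⟨fun b => finProdFinEquiv ((finProdFinEquiv.symm (req j)).1, pos b), dec,
    fun b => by simp [hβ b], fun x => ?_⟩
  have := hdec (fun t => x (finProdFinEquiv ((finProdFinEquiv.symm (req j)).1, t)))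
  simp only [Equiv.symm_apply_apply]
  conv_rhs => rw [← finProdFinEquiv.apply_symm_apply (req j)]
  exact this
end

section
/- If C^G is an [n, N^G] systematic linear code with minimum distance d^G and C^B is an (n, N^B, k, N^B) systematic primitive multiset batch code (both over the same field, with the message in the first n coordinates), then the code C that maps x to the concatenation of x, the parity symbols of C^B(x), and the parity symbols of C^G(x), is an (n, N^B + N^G − n, k, N^B + N^G − n) primitive multiset batch code with minimum distance at least d^G. -/
/-!
Both component codes are coordinate restrictions of the composed code: forgetting the
`PG`-parity coordinates leaves the batch code, forgetting the `PB`-parity coordinates leaves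
the linear code. Recovery sets of the batch code therefore serve the composed code, and
coordinates where two codewords of the linear code differ remain differing coordinates of
the composed codewords.
-/

/-- `C : (μ → F) → ι → F` is a primitive multiset batch code supporting `k` parallel
reads: each code symbol is its own bucket, and any multiset of `k` read requests for
message symbols can be served from pairwise disjoint sets of code symbols. -/
def IsPrimitiveMultisetBatchCode (F : Type*) {μ ι : Type*} (k : ℕ)
    (C : (μ → F) → ι → F) : Prop :=
  ∀ req : Fin k → μ, ∃ S : Fin k → Set ι,
    (∀ i j : Fin k, i ≠ j → Disjoint (S i) (S j)) ∧
    ∀ j : Fin k, ∃ dec : (S j → F) → F,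
      ∀ x : μ → F, dec (fun b => C x b.1) = x (req j)

section CoordinateEmbedding

variable {F μ ι ι' : Type*} {C : (μ → F) → ι → F} {C' : (μ → F) → ι' → F} {e : ι → ι'}

theorem IsPrimitiveMultisetBatchCode.of_comp {k : ℕ} (hC : IsPrimitiveMultisetBatchCode F k C)
    (he : e.Injective) (hC' : ∀ x, C' x ∘ e = C x) :
    IsPrimitiveMultisetBatchCode F k C' := by
  intro req
  obtain ⟨S, hdisj, hdec⟩ := hC req
  refine ⟨fun j => e '' S j, fun i j hij => (Set.disjoint_image_iff he).2 (hdisj i j hij),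
    fun j => ?_⟩
  obtain ⟨dec, hdec⟩ := hdec j
  refine ⟨fun f => dec fun b => f ⟨e b, Set.mem_image_of_mem e b.2⟩, fun x => ?_⟩
  simpa only [← hC' x, Function.comp_apply] using hdec x

theorem ncard_ne_le_ncard_ne_of_comp [Finite ι'] (he : e.Injective) (hC' : ∀ x, C' x ∘ e = C x)
    (x y : μ → F) :
    Set.ncard {i | C x i ≠ C y i} ≤ Set.ncard {i | C' x i ≠ C' y i} :=
  Set.ncard_le_ncard_of_injOn e
    (fun i hi => by simpa only [Set.mem_ofPred_eq, ← hC', Function.comp_apply] using hi) he.injOn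

end CoordinateEmbedding

/-- Composing a systematic primitive multiset batch code (parity part `PB`) with a
systematic linear code of minimum distance at least `dG` (parity part `PG`) by
concatenating the message with both parity parts yields a primitive multiset batch
code with minimum distance at least `dG`. -/
theorem stmt_12 {F : Type*} [Field F] (n pB pG k dG : ℕ)
    (PB : (Fin n → F) → Fin pB → F)
    (PG : (Fin n → F) →ₗ[F] (Fin pG → F))
    (hB : IsPrimitiveMultisetBatchCode F k
      (fun x : Fin n → F => Sum.elim x (PB x)))
    (hdG : ∀ x y : Fin n → F, x ≠ y →
      dG ≤ Set.ncard {i : Fin n ⊕ Fin pG |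
        Sum.elim x (PG x) i ≠ Sum.elim y (PG y) i}) :
    IsPrimitiveMultisetBatchCode F k
      (fun x : Fin n → F => Sum.elim x (Sum.elim (PB x) (PG x))) ∧
    ∀ x y : Fin n → F, x ≠ y →
      dG ≤ Set.ncard {i : Fin n ⊕ (Fin pB ⊕ Fin pG) |
        Sum.elim x (Sum.elim (PB x) (PG x)) i ≠
        Sum.elim y (Sum.elim (PB y) (PG y)) i} := by
  have forget_PG (x : Fin n → F) :
      Sum.elim x (Sum.elim (PB x) (PG x)) ∘ Sum.map id Sum.inl = Sum.elim x (PB x) := by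
    ext (_ | _) <;> rfl
  have forget_PB (x : Fin n → F) :
      Sum.elim x (Sum.elim (PB x) (PG x)) ∘ Sum.map id Sum.inr = Sum.elim x (PG x) := by
    ext (_ | _) <;> rfl
  refine ⟨hB.of_comp (Function.injective_id.sumMap Sum.inl_injective) forget_PG,
    fun x y hxy => (hdG x y hxy).trans ?_⟩
  exact ncard_ne_le_ncard_ne_of_comp (Function.injective_id.sumMap Sum.inr_injective)
    forget_PB x y
end

section
/- Let C be an [n, N] systematic linear code with bipartite graph G_C (left nodes = message symbols, right nodes = parity symbols, edge iff a message symbol participates in a parity). If there is an induced subgraph of G_C obtained by restricting to a subset of right nodes, in which every left node has degree at least k and which has girth at least 8, then C is an (n, N, k, N) primitive multiset batch code. -/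
/-!
The first request for each message symbol `m` is read from its systematic bucket. Every
later request `j` for `m` is served by a parity node `c` adjacent to `m`, from the bucket of `c`
and the systematic buckets of the other neighbours of `c`, which determine `x m`. The nodes `c`
are chosen greedily, request by request, such that `c` is adjacent to no other requested
symbol and shares no neighbour with the node chosen for an earlier request of another symbol.
Girth at least 8 makes each other request rule out at most one of the `≥ k` neighbours of `m`
in the subgraph, so a choice always remains.
-/

open Finset

theorem Fin.exists_greedy {α : Type*} {k : ℕ} [Nonempty (Fin k → α)]
    (good : Fin k → α → Prop) (compat : Fin k → Fin k → α → α → Prop)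
    (h : ∀ j (g : Fin k → α), (∀ i < j, good i (g i)) →
      ∃ c, good j c ∧ ∀ i < j, compat i j (g i) c) :
    ∃ g : Fin k → α, ∀ j, good j (g j) ∧ ∀ i < j, compat i j (g i) (g j) := by
  suffices ∀ t : ℕ, ∃ g : Fin k → α, ∀ j : Fin k, (j : ℕ) < t →
      good j (g j) ∧ ∀ i < j, compat i j (g i) (g j) by
    obtain ⟨g, hg⟩ := this k
    exact ⟨g, fun j => hg j j.isLt⟩
  intro t
  induction t with
  | zero => exact ⟨Classical.arbitrary _, fun j hj => absurd hj (Nat.not_lt_zero _)⟩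
  | succ t ih =>
    obtain ⟨g, hg⟩ := ih
    by_cases ht : t < k
    · let jt : Fin k := ⟨t, ht⟩
      obtain ⟨c, hc, hcompat⟩ := h jt g fun i hi => (hg i hi).1
      have hupdate : ∀ i : Fin k, (i : ℕ) < t → Function.update g jt c i = g i :=
        fun i hi => Function.update_of_ne (Fin.ne_of_lt hi) _ _
      refine ⟨Function.update g jt c, fun j hj => ?_⟩
      rcases Nat.lt_succ_iff_lt_or_eq.1 hj with hj | hj
      · rw [hupdate j hj]
        refine ⟨(hg j hj).1, fun i hij => ?_⟩
        rw [hupdate i ((show (i : ℕ) < j from hij).trans hj)]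
        exact (hg j hj).2 i hij
      · obtain rfl : j = jt := Fin.ext hj
        rw [Function.update_self]
        exact ⟨hc, fun i hij => by rw [hupdate i hij]; exact hcompat i hij⟩
    · exact ⟨g, fun j hj => hg j (by omega)⟩

section FirstOccurrence

variable {ι α : Type*}

def IsFirstOccurrence [LT ι] (req : ι → α) (j : ι) : Prop :=
  ∀ i < j, req i ≠ req j

theorem exists_isFirstOccurrence [LinearOrder ι] [WellFoundedLT ι] (req : ι → α) (j : ι) :
    ∃ i, req i = req j ∧ IsFirstOccurrence req i := by
  induction j using WellFoundedLT.induction with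
  | _ j ih =>
    by_cases hj : IsFirstOccurrence req j
    · exact ⟨j, rfl, hj⟩
    · obtain ⟨i, hij, hi⟩ : ∃ i < j, req i = req j := by
        simpa [IsFirstOccurrence] using hj
      obtain ⟨i', hi', hfirst⟩ := ih i hij
      exact ⟨i', hi'.trans hi, hfirst⟩

end FirstOccurrence

section BipartiteGraph

variable {V₁ V₂ : Type*} {Adj : V₁ → V₂ → Prop}

theorem No4Cycle.subsingleton_common_neighbors (h4 : No4Cycle Adj) {v w : V₁} (hvw : v ≠ w) :
    {c | Adj v c ∧ Adj w c}.Subsingleton := by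
  rintro c₁ ⟨hv₁, hw₁⟩ c₂ ⟨hv₂, hw₂⟩
  by_contra hne
  exact h4 v w c₁ c₂ hvw hne hv₁ hv₂ hw₁ hw₂

theorem No6Cycle.subsingleton_neighbors_sharing_neighbor (h4 : No4Cycle Adj)
    (h6 : No6Cycle Adj) {v : V₁} {a : V₂} (ha : ¬ Adj v a) :
    {c | Adj v c ∧ ∃ u, Adj u a ∧ Adj u c}.Subsingleton := by
  rintro c₁ ⟨hv₁, u₁, hu₁a, hu₁⟩ c₂ ⟨hv₂, u₂, hu₂a, hu₂⟩
  by_contra hne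
  have hvu₁ : v ≠ u₁ := by rintro rfl; exact ha hu₁a
  have hvu₂ : v ≠ u₂ := by rintro rfl; exact ha hu₂a
  have hu₁₂ : u₁ ≠ u₂ := by rintro rfl; exact h4 v u₁ c₁ c₂ hvu₁ hne hv₁ hv₂ hu₁ hu₂
  have hc₁a : c₁ ≠ a := by rintro rfl; exact ha hv₁
  have hac₂ : a ≠ c₂ := by rintro rfl; exact ha hv₂
  exact h6 v u₁ u₂ c₁ a c₂ hvu₁ hvu₂ hu₁₂ hc₁a hne hac₂ hv₁ hu₁ hu₁a hu₂a hu₂ hv₂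

variable {k : ℕ}

def IsPrivateNeighbor (Adj : V₁ → V₂ → Prop) (req : Fin k → V₁) (j : Fin k) (c : V₂) : Prop :=
  Adj (req j) c ∧ ∀ i, req i ≠ req j → ¬ Adj (req i) c

def CompatibleChoices (Adj : V₁ → V₂ → Prop) (v w : V₁) (a c : V₂) : Prop :=
  a ≠ c ∧ (v ≠ w → ∀ u, Adj u a → ¬ Adj u c)

/-- Adjacency of `c` to another requested symbol is charged to the first occurrence of that
symbol, so that each request obstructs at most one neighbour of `req j`. -/
def Obstructs (Adj : V₁ → V₂ → Prop) (req : Fin k → V₁) (g : Fin k → V₂) (j i : Fin k)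
    (c : V₂) : Prop :=
  (IsFirstOccurrence req i ∧ req i ≠ req j ∧ Adj (req i) c) ∨
    (i < j ∧ ¬ IsFirstOccurrence req i ∧ ¬ CompatibleChoices Adj (req i) (req j) (g i) c)

variable {req : Fin k → V₁} {g : Fin k → V₂} {j : Fin k}

theorem exists_obstructs {c : V₂} (hc : Adj (req j) c)
    (hbad : IsPrivateNeighbor Adj req j c → ∃ i < j, ¬ IsFirstOccurrence req i ∧
      ¬ CompatibleChoices Adj (req i) (req j) (g i) c) :
    ∃ i ≠ j, Obstructs Adj req g j i c := by
  by_cases hpriv : IsPrivateNeighbor Adj req j c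
  · obtain ⟨i, hij, hi, hcompat⟩ := hbad hpriv
    exact ⟨i, hij.ne, Or.inr ⟨hij, hi, hcompat⟩⟩
  · obtain ⟨i, hi, hic⟩ : ∃ i, req i ≠ req j ∧ Adj (req i) c := by
      simpa [IsPrivateNeighbor, hc] using hpriv
    obtain ⟨i', hi', hfirst⟩ := exists_isFirstOccurrence req i
    refine ⟨i', ?_, Or.inl ⟨hfirst, hi' ▸ hi, hi' ▸ hic⟩⟩
    rintro rfl
    exact hi hi'.symm

theorem Obstructs.subsingleton (h4 : No4Cycle Adj) (h6 : No6Cycle Adj)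
    (hg : ∀ i < j, ¬ IsFirstOccurrence req i → IsPrivateNeighbor Adj req i (g i)) (i : Fin k) :
    {c | Adj (req j) c ∧ Obstructs Adj req g j i c}.Subsingleton := by
  by_cases hfirst : IsFirstOccurrence req i
  · by_cases hreq : req j = req i
    · intro c hc
      simp [Obstructs, hfirst, hreq] at hc
    · refine (h4.subsingleton_common_neighbors hreq).anti fun c hc => ?_
      simpa [Obstructs, hfirst, Ne.symm hreq] using hc
  by_cases hij : i < j
  · obtain ⟨-, hgi_private⟩ := hg i hij hfirst
    by_cases hreq : req i = req j
    · refine (Set.subsingleton_singleton (a := g i)).anti fun c ⟨_, hobs⟩ => ?_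
      simpa [Obstructs, CompatibleChoices, hfirst, hij, hreq, eq_comm] using hobs
    · refine (h6.subsingleton_neighbors_sharing_neighbor h4 (hgi_private j (Ne.symm hreq))).anti
        fun c ⟨hc, hobs⟩ => ⟨hc, ?_⟩
      have hgic : g i ≠ c := by rintro rfl; exact hgi_private j (Ne.symm hreq) hc
      simpa [Obstructs, CompatibleChoices, hfirst, hij, hreq, hgic] using hobs
  · intro c hc
    simp [Obstructs, hfirst, hij] at hc

theorem exists_privateNeighbor_compatible (h4 : No4Cycle Adj) (h6 : No6Cycle Adj)
    {s : Finset V₂} (hs : k ≤ #s) (hadj : ∀ c ∈ s, Adj (req j) c)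
    (hg : ∀ i < j, ¬ IsFirstOccurrence req i → IsPrivateNeighbor Adj req i (g i)) :
    ∃ c, IsPrivateNeighbor Adj req j c ∧
      ∀ i < j, ¬ IsFirstOccurrence req i → CompatibleChoices Adj (req i) (req j) (g i) c := by
  by_contra! hbad
  have hcard : #s ≤ #(univ.erase j) := by
    refine card_le_card_of_forall_subsingleton (fun c i => Obstructs Adj req g j i c)
      (fun c hc => ?_) fun i _ =>
        (Obstructs.subsingleton h4 h6 hg i).anti fun c hc => ⟨hadj c hc.1, hc.2⟩
    obtain ⟨i, hij, hobs⟩ := exists_obstructs (hadj c hc) (hbad c)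
    exact ⟨i, mem_erase.2 ⟨hij, mem_univ i⟩, hobs⟩
  rw [card_erase_of_mem (mem_univ j), card_univ, Fintype.card_fin] at hcard
  have := j.pos
  omega

theorem exists_parity_assignment (h4 : No4Cycle Adj) (h6 : No6Cycle Adj)
    (hdeg : ∀ v, ∃ s : Finset V₂, k ≤ #s ∧ ∀ c ∈ s, Adj v c) (req : Fin k → V₁) :
    ∃ g : Fin k → V₂, ∀ j,
      (¬ IsFirstOccurrence req j → IsPrivateNeighbor Adj req j (g j)) ∧
      ∀ i < j, (¬ IsFirstOccurrence req i → ¬ IsFirstOccurrence req j →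
        CompatibleChoices Adj (req i) (req j) (g i) (g j)) := by
  have hV₂ (j : Fin k) : Nonempty V₂ := by
    obtain ⟨s, hs, -⟩ := hdeg (req j)
    obtain ⟨c, -⟩ := card_pos.1 (j.pos.trans_le hs)
    exact ⟨c⟩
  have : Nonempty (Fin k → V₂) := ⟨fun j => (hV₂ j).some⟩
  refine Fin.exists_greedy (fun j c => ¬ IsFirstOccurrence req j → IsPrivateNeighbor Adj req j c)
    (fun i j a c => ¬ IsFirstOccurrence req i → ¬ IsFirstOccurrence req j →
      CompatibleChoices Adj (req i) (req j) a c) fun j g hg => ?_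
  by_cases hj : IsFirstOccurrence req j
  · exact ⟨g j, fun h => (h hj).elim, fun _ _ _ h => (h hj).elim⟩
  · obtain ⟨s, hs, hadj⟩ := hdeg (req j)
    obtain ⟨c, hc, hcompat⟩ := exists_privateNeighbor_compatible h4 h6 hs hadj hg
    exact ⟨c, fun _ => hc, fun i hij hi _ => hcompat i hij hi⟩

end BipartiteGraph

section SystematicCode

variable {F : Type*} [Field F] {μ π ι : Type*}

def systematicCode [Fintype μ] (E : Matrix μ π F) (x : μ → F) : μ ⊕ π → F :=
  Sum.elim x fun c => ∑ i, E i c * x i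

def IsRecoverySet (F : Type*) (C : (μ → F) → ι → F) (S : Set ι) (m : μ) : Prop :=
  ∃ dec : (S → F) → F, ∀ x, dec (fun b => C x b.1) = x m

theorem IsRecoverySet.of_eqOn {C : (μ → F) → ι → F} {S : Set ι} {m : μ} (D : (ι → F) → F)
    (hD : ∀ y y', Set.EqOn y y' S → D y = D y') (hC : ∀ x, D (C x) = x m) :
    IsRecoverySet F C S m := by
  classical
  refine ⟨fun f => D fun b => if h : b ∈ S then f ⟨b, h⟩ else 0, fun x => ?_⟩
  rw [← hC x]
  exact hD _ _ fun b hb => by simp [hb]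

theorem isRecoverySet_singleton_inl [Fintype μ] (E : Matrix μ π F) (m : μ) :
    IsRecoverySet F (systematicCode E) {Sum.inl m} m :=
  ⟨fun f => f ⟨Sum.inl m, rfl⟩, fun _ => rfl⟩

def recoverySet (E : Matrix μ π F) (m : μ) (c : π) : Set (μ ⊕ π) :=
  insert (Sum.inr c) (Sum.inl '' {i | i ≠ m ∧ E i c ≠ 0})

theorem isRecoverySet_recoverySet [Fintype μ] [DecidableEq μ] {E : Matrix μ π F} {m : μ} {c : π}
    (hmc : E m c ≠ 0) : IsRecoverySet F (systematicCode E) (recoverySet E m c) m := by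
  refine .of_eqOn (fun y => (y (.inr c) - ∑ i ∈ univ.erase m, E i c * y (.inl i)) / E m c)
    (fun y y' hyy' => ?_) fun x => ?_
  · have hsum : ∀ i ∈ univ.erase m, E i c * y (.inl i) = E i c * y' (.inl i) := by
      intro i hi
      by_cases hic : E i c = 0
      · simp [hic]
      · rw [hyy' (Or.inr ⟨i, ⟨ne_of_mem_erase hi, hic⟩, rfl⟩)]
    rw [hyy' (Set.mem_insert _ _), sum_congr rfl hsum]
  · simp only [systematicCode, Sum.elim_inl, Sum.elim_inr]
    rw [← add_sum_erase _ _ (mem_univ m), add_sub_cancel_right, mul_div_cancel_left₀ _ hmc]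

theorem disjoint_singleton_inl_recoverySet {E : Matrix μ π F} {v m : μ} {c : π}
    (h : v ≠ m → E v c = 0) : Disjoint {Sum.inl v} (recoverySet E m c) := by
  refine Set.disjoint_singleton_left.2 ?_
  rintro (hvc | ⟨u, ⟨hum, huc⟩, hu⟩)
  · exact Sum.inl_ne_inr hvc
  · obtain rfl := Sum.inl_injective hu
    exact huc (h hum)

theorem disjoint_recoverySet {E : Matrix μ π F} {m m' : μ} {c c' : π} (hcc' : c ≠ c')
    (h : ∀ u, u ≠ m → u ≠ m' → E u c ≠ 0 → E u c' = 0) :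
    Disjoint (recoverySet E m c) (recoverySet E m' c') := by
  refine Set.disjoint_left.2 ?_
  rintro b (rfl | ⟨u, ⟨hum, huc⟩, rfl⟩) (hb | ⟨u', ⟨hu'm', hu'c'⟩, hb⟩)
  · exact hcc' (Sum.inr_injective hb)
  · exact Sum.inl_ne_inr hb
  · exact Sum.inl_ne_inr hb
  · obtain rfl := Sum.inl_injective hb
    exact hu'c' (h u' hum hu'm' huc)

open Classical in
def servingSet {k : ℕ} (E : Matrix μ π F) (req : Fin k → μ) (g : Fin k → π) (j : Fin k) :
    Set (μ ⊕ π) :=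
  if IsFirstOccurrence req j then {Sum.inl (req j)} else recoverySet E (req j) (g j)

theorem pairwise_disjoint_servingSet {k : ℕ} {E : Matrix μ π F} {V : Set π}
    (h4 : No4Cycle fun i (c : V) => E i c ≠ 0) {req : Fin k → μ} {g : Fin k → V}
    (hg : ∀ j, (¬ IsFirstOccurrence req j →
        IsPrivateNeighbor (fun i (c : V) => E i c ≠ 0) req j (g j)) ∧
      ∀ i < j, (¬ IsFirstOccurrence req i → ¬ IsFirstOccurrence req j →
        CompatibleChoices (fun i (c : V) => E i c ≠ 0) (req i) (req j) (g i) (g j))) :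
    Pairwise (Function.onFun Disjoint (servingSet E req fun j => (g j).1)) := by
  refine (pairwise_disjoint_on _).2 fun i j hij => ?_
  simp only [servingSet]
  split_ifs with hi hj hj
  · exact Set.disjoint_singleton.2 fun h => hj i hij (Sum.inl_injective h)
  · exact disjoint_singleton_inl_recoverySet fun hne => not_not.1 (((hg j).1 hj).2 i hne)
  · exact (disjoint_singleton_inl_recoverySet fun hne => not_not.1 (((hg i).1 hi).2 j hne)).symm
  · obtain ⟨hgij, hnbr⟩ := (hg j).2 i hij hi hj
    refine disjoint_recoverySet (fun h => hgij (Subtype.ext h)) fun u hui huj hu => ?_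
    by_contra hu'
    by_cases hreq : req i = req j
    · exact h4 u (req j) (g i) (g j) huj hgij hu hu' (hreq ▸ ((hg i).1 hi).1) ((hg j).1 hj).1
    · exact hnbr hreq u hu hu'

theorem isRecoverySet_servingSet [Fintype μ] {k : ℕ} {E : Matrix μ π F} {req : Fin k → μ}
    {g : Fin k → π} {j : Fin k} (h : ¬ IsFirstOccurrence req j → E (req j) (g j) ≠ 0) :
    IsRecoverySet F (systematicCode E) (servingSet E req g j) (req j) := by
  classical
  unfold servingSet
  split_ifs with hj
  · exact isRecoverySet_singleton_inl E _
  · exact isRecoverySet_recoverySet (h hj)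

end SystematicCode

/-- Sufficient condition for a systematic linear code with generator matrix
`[Iₙ | Emat]` to be a primitive multiset batch code supporting `k` parallel reads:
there is a subset `V2'` of the parity nodes such that in the induced bipartite
subgraph every message node has degree at least `k` and there are no 4- or 6-cycles
(girth at least 8). -/
theorem stmt_13 {F : Type*} [Field F] (n p k : ℕ)
    (Emat : Matrix (Fin n) (Fin p) F) (V2' : Set (Fin p))
    (hdeg : ∀ i : Fin n, ∃ s : Finset (Fin p),
      k ≤ s.card ∧ ∀ j ∈ s, j ∈ V2' ∧ Emat i j ≠ 0)
    (h4 : No4Cycle (fun (i : Fin n) (j : V2') => Emat i j.1 ≠ 0))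
    (h6 : No6Cycle (fun (i : Fin n) (j : V2') => Emat i j.1 ≠ 0)) :
    IsPrimitiveMultisetBatchCode F k
      (fun x : Fin n → F =>
        Sum.elim x (fun j : Fin p => ∑ i : Fin n, Emat i j * x i)) := by
  intro req
  have hdeg' (i : Fin n) : ∃ s : Finset V2', k ≤ #s ∧ ∀ c ∈ s, Emat i c ≠ 0 := by
    classical
    obtain ⟨s, hs, hsV⟩ := hdeg i
    refine ⟨s.subtype (· ∈ V2'), ?_, fun c hc => (hsV c (mem_subtype.1 hc)).2⟩
    rwa [card_subtype, filter_true_of_mem fun c hc => (hsV c hc).1]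
  obtain ⟨g, hg⟩ := exists_parity_assignment h4 h6 hdeg' req
  exact ⟨servingSet Emat req (fun j => (g j).1), pairwise_disjoint_servingSet h4 hg,
    fun j => isRecoverySet_servingSet fun hj => ((hg j).1 hj).1⟩
end

section
/- Let G be a bipartite graph with girth at least 8 and minimum left degree k, and suppose x_1,...,x_j are distinct left vertices with already-assigned pairwise disjoint vertex sets S_1,...,S_r (r < k) where each S_i is either a singleton of some left vertex x_u (u ≤ j) or a repair group of some x_u (u ≤ j). Then for any left vertex x_{j+1} distinct from x_1,...,x_j, at least k − r of the k pairwise disjoint repair groups of x_{j+1} are disjoint from S_1 ∪ ... ∪ S_r. -/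
/-- Greedy step: in a bipartite graph with girth at least 8 and minimum left degree
at least `k`, if `r < k` pairwise disjoint sets `S u` have been assigned, each being
a singleton of one of the distinct left vertices `xs v` or a repair group of some
`xs v`, then for a new left vertex `y` (distinct from all `xs v`) at least `k - r` of
its `k` pairwise disjoint repair groups (given by its distinct right-neighbors `c a`)
avoid all the sets `S u`. -/
theorem stmt_14 {V1 V2 : Type*} (E : V1 → V2 → Prop) (k r j : ℕ)
    (h4 : No4Cycle E) (h6 : No6Cycle E)
    (hdeg : ∀ x : V1, ∃ s : Finset V2, k ≤ s.card ∧ ∀ c ∈ s, E x c)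
    (xs : Fin j → V1) (hxs : Function.Injective xs)
    (y : V1) (hy : ∀ v : Fin j, y ≠ xs v)
    (hrk : r < k)
    (S : Fin r → Set (V1 ⊕ V2))
    (hS : ∀ u : Fin r,
      (∃ v : Fin j, S u = {Sum.inl (xs v)}) ∨
      (∃ (v : Fin j) (c' : V2), E (xs v) c' ∧ S u = repairGroup E (xs v) c'))
    (hSdisj : ∀ u w : Fin r, u ≠ w → Disjoint (S u) (S w))
    (c : Fin k → V2) (hcinj : Function.Injective c) (hc : ∀ a : Fin k, E y (c a)) :
    ∃ T : Finset (Fin k), k - r ≤ T.card ∧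
      ∀ a ∈ T, ∀ u : Fin r, Disjoint (repairGroup E y (c a)) (S u) := by
  classical
  have memRG : ∀ (x0 : V1) (d : V2) (p : V1 ⊕ V2), p ∈ repairGroup E x0 d →
      p = Sum.inr d ∨ ∃ z, E z d ∧ z ≠ x0 ∧ p = Sum.inl z := by
    intro x0 d p hp
    rcases hp with hp | ⟨z, hz, rfl⟩
    · exact Or.inl hp
    · exact Or.inr ⟨z, hz.1, hz.2, rfl⟩
  have key : ∀ (u : Fin r) (a a' : Fin k), a ≠ a' →
      ¬ Disjoint (repairGroup E y (c a)) (S u) →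
      ¬ Disjoint (repairGroup E y (c a')) (S u) → False := by
    intro u a a' hne hda hda'
    have hca : c a ≠ c a' := fun h => hne (hcinj h)
    obtain ⟨p, hp1, hp2⟩ := Set.not_disjoint_iff.mp hda
    obtain ⟨q, hq1, hq2⟩ := Set.not_disjoint_iff.mp hda'
    rcases hS u with ⟨v, hSv⟩ | ⟨v, c', hEc', hSv⟩
    · rw [hSv, Set.mem_singleton_iff] at hp2 hq2
      subst hp2; subst hq2
      rcases memRG y (c a) _ hp1 with h | ⟨z, hz1, hz2, hz3⟩
      · exact absurd h (by simp)
      · rcases memRG y (c a') _ hq1 with h' | ⟨z', hz1', hz2', hz3'⟩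
        · exact absurd h' (by simp)
        · have e1 : xs v = z := Sum.inl.inj hz3
          have e2 : xs v = z' := Sum.inl.inj hz3'
          exact h4 y (xs v) (c a) (c a') (hy v) hca (hc a) (hc a')
            (e1 ▸ hz1) (e2 ▸ hz1')
    · rw [hSv] at hp2 hq2
      have Hp : c a = c' ∨ ∃ z, E z (c a) ∧ z ≠ y ∧ E z c' := by
        rcases memRG y (c a) p hp1 with rfl | ⟨z, hz1, hz2, rfl⟩
        · rcases memRG (xs v) c' _ hp2 with h | ⟨z, _, _, h⟩
          · exact Or.inl (Sum.inr.inj h)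
          · exact absurd h (by simp)
        · rcases memRG (xs v) c' _ hp2 with h | ⟨z', hz1', _, h⟩
          · exact absurd h (by simp)
          · exact Or.inr ⟨z, hz1, hz2, (Sum.inl.inj h) ▸ hz1'⟩
      have Hq : c a' = c' ∨ ∃ z, E z (c a') ∧ z ≠ y ∧ E z c' := by
        rcases memRG y (c a') q hq1 with rfl | ⟨z, hz1, hz2, rfl⟩
        · rcases memRG (xs v) c' _ hq2 with h | ⟨z, _, _, h⟩
          · exact Or.inl (Sum.inr.inj h)
          · exact absurd h (by simp)
        · rcases memRG (xs v) c' _ hq2 with h | ⟨z', hz1', _, h⟩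
          · exact absurd h (by simp)
          · exact Or.inr ⟨z, hz1, hz2, (Sum.inl.inj h) ▸ hz1'⟩
      rcases Hp with h1 | ⟨z, hz1, hz2, hz3⟩
      · rcases Hq with h2 | ⟨z', hw1, hw2, hw3⟩
        · exact hca (h1.trans h2.symm)
        · exact h4 y z' (c a) (c a') (Ne.symm hw2) hca (hc a) (hc a')
            (h1 ▸ hw3) hw1
      · rcases Hq with h2 | ⟨z', hw1, hw2, hw3⟩
        · exact h4 y z (c a) (c a') (Ne.symm hz2) hca (hc a) (hc a')
            hz1 (h2 ▸ hz3)
        · by_cases hzz : z = z'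
          · subst hzz
            exact h4 y z (c a) (c a') (Ne.symm hz2) hca (hc a) (hc a') hz1 hw1
          · by_cases h1 : c a = c'
            · exact h4 y z' (c a) (c a') (Ne.symm hw2) hca (hc a) (hc a')
                (h1 ▸ hw3) hw1
            · by_cases h2 : c a' = c'
              · exact h4 y z (c a) (c a') (Ne.symm hz2) hca (hc a) (hc a')
                  hz1 (h2 ▸ hz3)
              · exact h6 y z z' (c a) c' (c a') (Ne.symm hz2) (Ne.symm hw2) hzz
                  h1 hca (fun h => h2 h.symm)
                  (hc a) hz1 hz3 hw3 hw1 (hc a')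
  set bad : Finset (Fin k) :=
    Finset.univ.filter (fun a => ∃ u, ¬ Disjoint (repairGroup E y (c a)) (S u)) with hbaddef
  have hbadcard : bad.card ≤ r := by
    rcases Finset.eq_empty_or_nonempty bad with h | ⟨a0, ha0⟩
    · simp [h]
    · have : Nonempty (Fin r) := by
        obtain ⟨u, _⟩ := (Finset.mem_filter.mp ha0).2
        exact ⟨u⟩
      set f : Fin k → Fin r := fun a =>
        if h : ∃ u, ¬ Disjoint (repairGroup E y (c a)) (S u) then h.choose
        else Classical.arbitrary _ with hfdef
    -- injective on bad
      have := Finset.card_le_card_of_injOn (s := bad) (t := Finset.univ) f (fun _ _ => Finset.mem_univ _) ?_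
      · simpa using this
      · intro a ha a' ha' hfeq
        by_contra hne
        have hPa := (Finset.mem_filter.mp ha).2
        have hPa' := (Finset.mem_filter.mp ha').2
        have hfa : f a = hPa.choose := by simp [hfdef, dif_pos hPa]
        have hfa' : f a' = hPa'.choose := by simp [hfdef, dif_pos hPa']
        have h1 := hPa.choose_spec
        have h2 := hPa'.choose_spec
        rw [hfa, hfa'] at hfeq
        exact key hPa.choose a a' hne h1 (hfeq ▸ h2)
  refine ⟨badᶜ, ?_, ?_⟩
  · have : badᶜ.card = k - bad.card := by
      rw [Finset.card_compl]; simp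
    rw [this]
    exact Nat.sub_le_sub_left hbadcard k
  · intro a ha u
    have := Finset.mem_compl.mp ha
    rw [hbaddef, Finset.mem_filter] at this
    push_neg at this
    exact this (Finset.mem_univ a) u
end

section
/- Let C be a systematic linear code with generator matrix [I_n | E] over a field, and suppose the bipartite graph G_C of E has no 4-cycle. If every left vertex of G_C has degree at least k and every entry of E in the support is nonzero, then every message symbol x_i can be recovered from each of k pairwise disjoint sets of code symbols (disjoint repair groups), where the repair group for parity c_j containing x_i consists of c_j together with the message symbols other than x_i participating in c_j. -/
theorem repairGroup_disjoint {V1 V2 : Type*} {E : V1 → V2 → Prop} (h4 : No4Cycle E)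
    {x : V1} {c₁ c₂ : V2} (hc : c₁ ≠ c₂) (h₁ : E x c₁) (h₂ : E x c₂) :
    Disjoint (repairGroup E x c₁) (repairGroup E x c₂) := by
  rw [Set.disjoint_left]
  rintro z (rfl | ⟨y, ⟨hy₁, hyx⟩, rfl⟩)
  · rintro (hz | ⟨y, -, hy⟩)
    · exact hc (Sum.inr_injective hz)
    · exact Sum.inl_ne_inr hy
  · rintro (hz | ⟨y', ⟨hy₂, -⟩, hy'⟩)
    · exact Sum.inl_ne_inr hz
    · obtain rfl := Sum.inl_injective hy'
      exact h4 x y' c₁ c₂ (Ne.symm hyx) hc h₁ h₂ hy₁ hy₂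

/- Message symbols outside the repair group have `M u j = 0`, so the decoder may read them
as `0` when solving the parity equation for `x i`. -/
theorem exists_decoder_repairGroup {ι κ F : Type*} [Fintype ι] [Field F]
    (M : Matrix ι κ F) {i : ι} {j : κ} (hij : M i j ≠ 0) :
    ∃ dec : (repairGroup (fun u j => M u j ≠ 0) i j → F) → F, ∀ x : ι → F,
      dec (fun b => Sum.elim x (fun jj : κ => ∑ u : ι, M u jj * x u) b.1) = x i := by
  classical
  refine ⟨fun f => (f ⟨Sum.inr j, Or.inl rfl⟩ - ∑ u ∈ Finset.univ.erase i,
    if h : Sum.inl u ∈ repairGroup (fun u j => M u j ≠ 0) i j then M u j * f ⟨_, h⟩ else 0)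
      / M i j, fun x => ?_⟩
  have hterm : ∀ u ∈ Finset.univ.erase i,
      (if Sum.inl u ∈ repairGroup (fun u j => M u j ≠ 0) i j then M u j * x u else 0)
        = M u j * x u := by
    intro u hu
    refine ite_eq_left_iff.mpr fun h => ?_
    have huj : M u j = 0 := by
      by_contra huj
      exact h (Or.inr ⟨u, ⟨huj, Finset.ne_of_mem_erase hu⟩, rfl⟩)
    rw [huj, zero_mul]
  simp only [Sum.elim_inr, Sum.elim_inl, dite_eq_ite]
  rw [Finset.sum_congr rfl hterm, ← Finset.add_sum_erase _ _ (Finset.mem_univ i),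
    add_sub_cancel_right, mul_div_cancel_left₀ _ hij]

/-- For a systematic linear code with generator `[Iₙ | Emat]` whose bipartite graph
(edges = support of `Emat`) has no 4-cycle and minimum left degree at least `k`,
every message symbol `x i` has `k` pairwise disjoint repair groups, and can be
recovered (as a function of the symbols of the codeword `(x, x·Emat)` lying in the
repair group) from each of them. -/
theorem stmt_15 {F : Type*} [Field F] (n p k : ℕ)
    (Emat : Matrix (Fin n) (Fin p) F)
    (h4 : No4Cycle (fun (i : Fin n) (j : Fin p) => Emat i j ≠ 0))
    (hdeg : ∀ i : Fin n, ∃ s : Finset (Fin p), k ≤ s.card ∧ ∀ j ∈ s, Emat i j ≠ 0) :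
    ∀ i : Fin n, ∃ c : Fin k → Fin p,
      Function.Injective c ∧
      (∀ a : Fin k, Emat i (c a) ≠ 0) ∧
      (∀ a b : Fin k, a ≠ b →
        Disjoint (repairGroup (fun u j => Emat u j ≠ 0) i (c a))
                 (repairGroup (fun u j => Emat u j ≠ 0) i (c b))) ∧
      (∀ a : Fin k, ∃ dec : (repairGroup (fun u j => Emat u j ≠ 0) i (c a) → F) → F,
        ∀ x : Fin n → F,
          dec (fun b => Sum.elim x (fun jj : Fin p => ∑ u : Fin n, Emat u jj * x u) b.1)
            = x i) := by
  intro i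
  obtain ⟨s, hcard, hs⟩ := hdeg i
  let c := s.orderEmbOfCardLe hcard
  have hc : ∀ a, Emat i (c a) ≠ 0 := fun a => hs _ (s.orderEmbOfCardLe_mem hcard a)
  exact ⟨c, c.injective, hc,
    fun a b hab => repairGroup_disjoint h4 (c.injective.ne hab) (hc a) (hc b),
    fun a => exists_decoder_repairGroup Emat (hc a)⟩
end

section
/- For any prime power q ≥ 3 (so w = q satisfies 3 ≤ w ≤ q), a w-regular balanced bipartite graph of girth at least 8 on 2(q^3 − q) vertices, combined with the batch-code sufficiency criterion, yields an (n_1, N_1, k, m_1) primitive multiset batch code with n_1 = q^3 − q, N_1 = 2(q^3 − q), k = q, m_1 = N_1, and rate exactly 1/2. -/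
/-- recovery set for symbol `x` through check `c`. -/
def Srec {V1 V2 : Type*} (E : V1 → V2 → Prop) (x : V1) (c : V2) : Set (V1 ⊕ V2) :=
  {z | z = Sum.inr c ∨ ∃ y, z = Sum.inl y ∧ E y c ∧ y ≠ x}

lemma Srec_nondisj {V1 V2 : Type*} {E : V1 → V2 → Prop} {x x' : V1} {c c' : V2}
    (h : ¬ Disjoint (Srec E x c) (Srec E x' c')) :
    c = c' ∨ ∃ y, E y c ∧ E y c' ∧ y ≠ x ∧ y ≠ x' := by
  rw [Set.not_disjoint_iff] at h
  obtain ⟨z, hz1, hz2⟩ := h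
  rcases hz1 with h1 | ⟨y, rfl, hy1, hy2⟩
  · rcases hz2 with h2 | ⟨y, hy, _⟩
    · left; exact Sum.inr.inj (h1 ▸ h2)
    · exact absurd (h1 ▸ hy) (by simp)
  · rcases hz2 with h2 | ⟨y', hy', hy'1, hy'2⟩
    · exact absurd h2 (by simp)
    · right
      obtain rfl : y = y' := Sum.inl.inj hy'
      exact ⟨y, hy1, hy'1, hy2, hy'2⟩

/-- A single prior recovery set blocks at most one candidate check of `x`. -/
lemma Srec_block {V1 V2 : Type*} {E : V1 → V2 → Prop}
    (h4 : No4Cycle E) (h6 : No6Cycle E) {x x' : V1} {c1 c2 c' : V2}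
    (hc : c1 ≠ c2) (h1 : E x c1) (h2 : E x c2)
    (hd1 : ¬ Disjoint (Srec E x c1) (Srec E x' c'))
    (hd2 : ¬ Disjoint (Srec E x c2) (Srec E x' c')) : False := by
  rcases Srec_nondisj hd1 with h1' | ⟨y1, hy1c, hy1c', hy1x, hy1x'⟩
  · rcases Srec_nondisj hd2 with h2' | ⟨y2, hy2c, hy2c', hy2x, hy2x'⟩
    · exact hc (h1'.trans h2'.symm)
    · subst h1'
      exact h4 x y2 c1 c2 (Ne.symm hy2x) hc h1 h2 hy2c' hy2c
  · rcases Srec_nondisj hd2 with h2' | ⟨y2, hy2c, hy2c', hy2x, hy2x'⟩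
    · subst h2'
      exact h4 x y1 c1 c2 (Ne.symm hy1x) hc h1 h2 hy1c hy1c'
    · by_cases hyy : y1 = y2
      · subst hyy
        exact h4 x y1 c1 c2 (Ne.symm hy1x) hc h1 h2 hy1c hy2c
      · rcases eq_or_ne c' c1 with hcc1 | hcc1
        · exact h4 x y2 c1 c2 (Ne.symm hy2x) hc h1 h2 (hcc1 ▸ hy2c') hy2c
        · rcases eq_or_ne c' c2 with hcc2 | hcc2
          · exact h4 x y1 c1 c2 (Ne.symm hy1x) hc h1 h2 hy1c (hcc2 ▸ hy1c')
          · exact h6 x y1 y2 c1 c' c2 (Ne.symm hy1x) (Ne.symm hy2x) hyy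
              (Ne.symm hcc1) hc hcc2 h1 hy1c hy1c' hy2c' hy2c h2

lemma Srec_greedy {V1 V2 : Type*} [Fintype V2] {E : V1 → V2 → Prop} {q : ℕ}
    (h4 : No4Cycle E) (h6 : No6Cycle E)
    (hreg : ∀ x : V1, Nat.card {c : V2 // E x c} = q) :
    ∀ m, m ≤ q → ∀ req : Fin m → V1, ∃ ch : Fin m → V2,
      (∀ j, E (req j) (ch j)) ∧
      ∀ i j, i ≠ j → Disjoint (Srec E (req i) (ch i)) (Srec E (req j) (ch j)) := by
  classical
  intro m
  induction m with
  | zero => exact fun _ req => ⟨fun j => j.elim0, fun j => j.elim0, fun i => i.elim0⟩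
  | succ m ih =>
    intro hm req
    obtain ⟨ch, hch, hdisj⟩ := ih (Nat.le_of_succ_le hm) (fun i => req i.castSucc)
    set x := req (Fin.last m) with hx
    set N : Finset V2 := Finset.univ.filter (fun c => E x c) with hN
    have hNcard : N.card = q := by
      have := hreg x
      rwa [Nat.card_eq_fintype_card, Fintype.card_subtype] at this
    have hgood : ∃ c ∈ N, ∀ i : Fin m,
        Disjoint (Srec E x c) (Srec E (req i.castSucc) (ch i)) := by
      by_contra hbad
      push_neg at hbad
      have hf : ∀ c ∈ N, ∃ i : Fin m,
          ¬ Disjoint (Srec E x c) (Srec E (req i.castSucc) (ch i)) := by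
        intro c hc
        obtain ⟨i, hi⟩ := hbad c hc
        exact ⟨i, hi⟩
      choose f hfspec using hf
      have hinj : ∀ c1 ∈ N, ∀ c2 ∈ N, ∀ (h1 : c1 ∈ N) (h2 : c2 ∈ N),
          f c1 h1 = f c2 h2 → c1 = c2 := by
        intro c1 hc1 c2 hc2 h1 h2 hfe
        by_contra hne
        have e1 : E x c1 := by simpa [hN] using hc1
        have e2 : E x c2 := by simpa [hN] using hc2
        exact Srec_block h4 h6 hne e1 e2 (hfspec c1 h1)
          (hfe ▸ hfspec c2 h2)
      -- card bound
      have hle : N.card ≤ m := by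
        have : N.card ≤ Fintype.card (Fin m) := by
          classical
          let g : {c // c ∈ N} → Fin m := fun c => f c.1 c.2
          have : Function.Injective g := by
            intro a b hab
            exact Subtype.ext (hinj a.1 a.2 b.1 b.2 a.2 b.2 hab)
          calc N.card = Fintype.card {c // c ∈ N} := (Fintype.card_coe N).symm
            _ ≤ Fintype.card (Fin m) := Fintype.card_le_of_injective g this
        simpa using this
      omega
    obtain ⟨c, hcN, hc⟩ := hgood
    have hEc : E x c := by simpa [hN] using hcN
    refine ⟨Fin.snoc ch c, ?_, ?_⟩
    · intro j
      refine Fin.lastCases ?_ ?_ j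
      · simpa [hx] using hEc
      · intro i; simpa using hch i
    · intro i j hij
      rcases Fin.eq_castSucc_or_eq_last i with ⟨i', rfl⟩ | rfl <;>
        rcases Fin.eq_castSucc_or_eq_last j with ⟨j', rfl⟩ | rfl
      · have hne : i' ≠ j' := fun h => hij (by rw [h])
        simpa using hdisj i' j' hne
      · simpa [hx] using (hc i').symm
      · simpa [hx] using hc j'
      · exact absurd rfl hij

/-- From a `q`-regular balanced bipartite graph on `2(q³ − q)` vertices with girth at
least 8 (Balbuena), where `q ≥ 3` is a prime power, one obtains a systematic primitive
multiset batch code with `n₁ = q³ − q` message symbols, `N₁ = 2(q³ − q)` code symbols,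
supporting `k = q` parallel reads, of rate exactly `1/2`. -/
theorem stmt_18 {V1 V2 : Type*} [Fintype V1] [Fintype V2] (q : ℕ)
    (hq : ∃ p n : ℕ, p.Prime ∧ 0 < n ∧ q = p ^ n) (hq3 : 3 ≤ q)
    (E : V1 → V2 → Prop)
    (hcard1 : Fintype.card V1 = q ^ 3 - q)
    (hcard2 : Fintype.card V2 = q ^ 3 - q)
    (hregL : ∀ x : V1, Nat.card {c : V2 // E x c} = q)
    (hregR : ∀ c : V2, Nat.card {x : V1 // E x c} = q)
    (h4 : No4Cycle E) (h6 : No6Cycle E)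
    (F : Type*) [Field F] :
    ∃ C : (V1 → F) → (V1 ⊕ V2) → F,
      (∀ (x : V1 → F) (i : V1), C x (Sum.inl i) = x i) ∧
      IsPrimitiveMultisetBatchCode F q C ∧
      ((Fintype.card V1 : ℚ) / ((Fintype.card V1 + Fintype.card V2 : ℕ) : ℚ)
        = 1 / 2) := by
  classical
  refine ⟨fun x => Sum.elim x (fun c => ∑ y ∈ Finset.univ.filter (fun y => E y c), x y),
    fun x i => rfl, ?_, ?_⟩
  · intro req
    obtain ⟨ch, hch, hdisj⟩ := Srec_greedy h4 h6 hregL q le_rfl req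
    refine ⟨fun j => Srec E (req j) (ch j), hdisj, ?_⟩
    intro j
    set c := ch j with hc
    set x0 := req j with hx0
    set T : Finset V1 := Finset.univ.filter (fun y => E y c ∧ y ≠ x0) with hT
    refine ⟨fun f => f ⟨Sum.inr c, Or.inl rfl⟩ -
      ∑ y ∈ T.attach, f ⟨Sum.inl y.1, Or.inr ⟨y.1, rfl, (Finset.mem_filter.mp y.2).2⟩⟩, ?_⟩
    intro x
    simp only [Sum.elim_inr]
    have hsum : ∑ y ∈ T.attach,
        (fun b : (Srec E (req j) (ch j)) => Sum.elim x
          (fun c => ∑ y ∈ Finset.univ.filter (fun y => E y c), x y) b.1)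
          ⟨Sum.inl y.1, Or.inr ⟨y.1, rfl, (Finset.mem_filter.mp y.2).2⟩⟩
        = ∑ y ∈ T, x y := by
      rw [← Finset.sum_attach T (fun y => x y)]
      rfl
    rw [hsum]
    have hTe : T = (Finset.univ.filter (fun y => E y c)).erase x0 := by
      ext y
      simp [hT, Finset.mem_erase, and_comm]
    have hx0mem : x0 ∈ Finset.univ.filter (fun y => E y c) := by
      simp [hc, hx0, hch j]
    rw [hTe]
    have := Finset.add_sum_erase _ x hx0mem
    rw [← this]
    ring
  · rw [hcard1, hcard2]
    have hpos : 0 < q ^ 3 - q := by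
      have h9 : 9 ≤ q * q := Nat.mul_le_mul hq3 hq3
      have hqq : q ^ 3 = q * (q * q) := by ring
      have hlt : q < q ^ 3 := by nlinarith
      omega
    have ha : (0:ℚ) < ((q ^ 3 - q : ℕ) : ℚ) := by exact_mod_cast hpos
    have hcast : (((q ^ 3 - q) + (q ^ 3 - q) : ℕ) : ℚ)
        = ((q ^ 3 - q : ℕ) : ℚ) + ((q ^ 3 - q : ℕ) : ℚ) := by push_cast; ring
    rw [hcast, div_eq_div_iff (by linarith) (by norm_num)]
    ring
end
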